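/- arXiv:1005.4466 — 6 statements merged into one kernel-verified Lean document; each statement's English description precedes it below -/
import Mathlib

section
/- Let A = A₀ ⊕ A₁ be a supercommutative ring in which 2 is invertible, and let 𝔭 ⊆ A be a homogeneous (two-sided) ideal, i.e. 𝔭 = (𝔭 ∩ A₀) ⊕ (𝔭 ∩ A₁). Then 𝔭 ≠ A and the quotient ring A/𝔭 has no nonzero zero divisors if and only if 𝔭 ∩ A₀ is a prime ideal of the commutative ring A₀ and 𝔭 ∩ A₁ = A₁. -/
/-- A supercommutative ring: a ring `A` with a direct sum decomposition
`A = A₀ ⊕ A₁` into additive subgroups, with `1 ∈ A₀`, `Aᵢ · Aⱼ ⊆ A_{i+j}`,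
and the Koszul sign rule on homogeneous elements. -/
structure SuperGrading (A : Type*) [Ring A] where
  even : AddSubgroup A
  odd : AddSubgroup A
  one_mem : (1 : A) ∈ even
  directSum : ∀ a : A, ∃! p : A × A, p.1 ∈ even ∧ p.2 ∈ odd ∧ a = p.1 + p.2
  even_mul_even : ∀ a ∈ even, ∀ b ∈ even, a * b ∈ even
  even_mul_odd : ∀ a ∈ even, ∀ b ∈ odd, a * b ∈ odd
  odd_mul_even : ∀ a ∈ odd, ∀ b ∈ even, a * b ∈ odd
  odd_mul_odd : ∀ a ∈ odd, ∀ b ∈ odd, a * b ∈ even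
  comm_even_even : ∀ a ∈ even, ∀ b ∈ even, a * b = b * a
  comm_even_odd : ∀ a ∈ even, ∀ b ∈ odd, a * b = b * a
  comm_odd_odd : ∀ a ∈ odd, ∀ b ∈ odd, a * b = -(b * a)

/-- Let `A = A₀ ⊕ A₁` be a supercommutative ring in which `2` is invertible,
and let `𝔭 ⊆ A` be a homogeneous (two-sided) ideal, i.e. `𝔭 = (𝔭 ∩ A₀) ⊕ (𝔭 ∩ A₁)`.
Then `𝔭 ≠ A` and the quotient ring `A/𝔭` has no nonzero zero divisors if and only if
`𝔭 ∩ A₀` is a prime ideal of the commutative ring `A₀` and `𝔭 ∩ A₁ = A₁`. -/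
theorem superGrading_prime_ideal_iff {A : Type*} [Ring A] (G : SuperGrading A)
    (h2 : IsUnit (2 : A)) (𝔭 : AddSubgroup A)
    (hleft : ∀ a : A, ∀ x ∈ 𝔭, a * x ∈ 𝔭) (hright : ∀ a : A, ∀ x ∈ 𝔭, x * a ∈ 𝔭)
    (hhom : ∀ x ∈ 𝔭, ∀ x₀ ∈ G.even, ∀ x₁ ∈ G.odd, x = x₀ + x₁ → x₀ ∈ 𝔭 ∧ x₁ ∈ 𝔭) :
    (𝔭 ≠ ⊤ ∧ ∀ a b : A, a * b ∈ 𝔭 → a ∈ 𝔭 ∨ b ∈ 𝔭) ↔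
      (((1 : A) ∉ 𝔭 ∧ ∀ a ∈ G.even, ∀ b ∈ G.even, a * b ∈ 𝔭 → a ∈ 𝔭 ∨ b ∈ 𝔭) ∧
        ∀ x ∈ G.odd, x ∈ 𝔭) := by
  constructor
  · rintro ⟨hne, hp⟩
    refine ⟨⟨fun h1 => hne ?_, fun a _ b _ hab => hp a b hab⟩, fun x hx => ?_⟩
    · ext a
      simp only [AddSubgroup.mem_top, iff_true]
      simpa using hleft a 1 h1
    · -- x * x = 0 since 2 is invertible
      have hsq : x * x = -(x * x) := G.comm_odd_odd x hx x hx
      have h2sq : (2 : A) * (x * x) = 0 := by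
        rw [two_mul]; nth_rewrite 1 [hsq]; exact neg_add_cancel _
      have hxx : x * x = 0 :=
        h2.mul_left_cancel (by rw [h2sq, mul_zero])
      have := hp x x (hxx ▸ 𝔭.zero_mem)
      tauto
  · rintro ⟨⟨h1, hev⟩, hodd⟩
    constructor
    · intro h
      exact h1 (h ▸ AddSubgroup.mem_top 1)
    · intro a b hab
      obtain ⟨⟨a₀, a₁⟩, ⟨ha₀, ha₁, haeq⟩, -⟩ := G.directSum a
      obtain ⟨⟨b₀, b₁⟩, ⟨hb₀, hb₁, hbeq⟩, -⟩ := G.directSum b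
      have ha₁p : a₁ ∈ 𝔭 := hodd a₁ ha₁
      have hb₁p : b₁ ∈ 𝔭 := hodd b₁ hb₁
      have hab' : a₀ * b₀ ∈ 𝔭 := by
        have : a₀ * b₀ = a * b - (a₀ * b₁ + a₁ * b₀ + a₁ * b₁) := by
          rw [haeq, hbeq]; noncomm_ring
        rw [this]
        exact 𝔭.sub_mem hab (𝔭.add_mem (𝔭.add_mem (hleft a₀ b₁ hb₁p)
          (hright b₀ a₁ ha₁p)) (hleft a₁ b₁ hb₁p))
      rcases hev a₀ ha₀ b₀ hb₀ hab' with h | h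
      · exact Or.inl (haeq ▸ 𝔭.add_mem h ha₁p)
      · exact Or.inr (hbeq ▸ 𝔭.add_mem h hb₁p)
end

section
/- Let R be a commutative ring and let f ∈ R((t)) be a formal Laurent series all of whose coefficients in negative degrees are nilpotent. If the coefficient of t⁰ in f is a unit of R, then f is invertible in R((t)), and the inverse of f again has all of its coefficients in negative degrees nilpotent; that is, f is a unit of the subring R((t))^√. -/
/-!
Split `f` at degree `0`: the part in negative degrees has finitely many coefficients, all
nilpotent, so it is nilpotent; the rest is a power series with unit constant term, hence a
unit. A unit plus a nilpotent is a unit, and since both summands and the inverse of the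
power series lie in `R((t))^√`, the argument runs inside that subring and the inverse of `f`
lands there as well.
-/

namespace HahnSeries

variable {Γ R : Type*} [PartialOrder Γ]

theorem isNilpotent_single [AddCommMonoid Γ] [IsOrderedCancelAddMonoid Γ] [Semiring R] {r : R}
    (hr : IsNilpotent r) (a : Γ) : IsNilpotent (single a r) := by
  obtain ⟨n, hn⟩ := hr
  exact ⟨n, by rw [single_pow, hn, single_eq_zero]⟩

theorem eq_sum_single_of_support_finite [Semiring R] {x : HahnSeries Γ R}
    (hx : x.support.Finite) : x = ∑ g ∈ hx.toFinset, single g (x.coeff g) := by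
  classical
  ext g
  rw [coeff_sum, Finset.sum_eq_single g (fun b _ hb => coeff_single_of_ne hb.symm),
    coeff_single_same]
  intro hg
  rw [coeff_single_same]
  simpa using hg

theorem isNilpotent_of_support_finite [AddCommMonoid Γ] [IsOrderedCancelAddMonoid Γ]
    [CommSemiring R] {x : HahnSeries Γ R} (hx : x.support.Finite)
    (hnil : ∀ g, IsNilpotent (x.coeff g)) : IsNilpotent x := by
  rw [eq_sum_single_of_support_finite hx]
  exact isNilpotent_sum fun g _ => isNilpotent_single (hnil g) g

end HahnSeries

namespace LaurentSeries

open HahnSeries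

theorem support_truncLT_finite {R : Type*} [Zero R] (c : ℤ) (x : LaurentSeries R) :
    (truncLT c x).support.Finite := by
  refine (Set.finite_Ico x.order c).subset fun i hi => ?_
  rw [support_truncLT] at hi
  exact ⟨order_le_of_coeff_ne_zero hi.1, hi.2⟩

theorem truncLT_zero_add_powerSeries_mk {R : Type*} [Semiring R] (x : LaurentSeries R) :
    truncLT 0 x + ((PowerSeries.mk fun n : ℕ => x.coeff n : PowerSeries R) : LaurentSeries R)
      = x := by
  ext i
  rw [coeff_add, HahnSeries.coeff_truncLT, PowerSeries.coeff_coe]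
  split_ifs with hi
  · rw [add_zero]
  · rw [zero_add, PowerSeries.coeff_mk, Int.natAbs_of_nonneg (not_lt.mp hi)]

variable (R : Type*) [CommRing R]

/-- The subring `R((t))^√`. -/
def negCoeffNilpotentSubring : Subring (LaurentSeries R) where
  carrier := {x | ∀ n < 0, IsNilpotent (x.coeff n)}
  zero_mem' _ _ := by simp
  one_mem' n hn := by simp [coeff_one, hn.ne]
  add_mem' hx hy n hn := by
    rw [coeff_add]
    exact (Commute.all _ _).isNilpotent_add (hx n hn) (hy n hn)
  neg_mem' hx n hn := by
    rw [coeff_neg]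
    exact (hx n hn).neg
  mul_mem' {x y} hx hy n hn := by
    rw [coeff_mul]
    refine isNilpotent_sum fun ij hij => ?_
    obtain ⟨-, -, hsum⟩ := Finset.mem_antidiagonal.mp hij
    rcases lt_or_ge ij.1 0 with h1 | h1
    · exact (Commute.all _ _).isNilpotent_mul_right (hx _ h1)
    · exact (Commute.all _ _).isNilpotent_mul_left (hy _ (by omega))

variable {R}

theorem mem_negCoeffNilpotentSubring {x : LaurentSeries R} :
    x ∈ negCoeffNilpotentSubring R ↔ ∀ n < 0, IsNilpotent (x.coeff n) :=
  Iff.rfl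

theorem coe_powerSeries_mem_negCoeffNilpotentSubring (p : PowerSeries R) :
    (p : LaurentSeries R) ∈ negCoeffNilpotentSubring R := fun n hn => by
  rw [PowerSeries.coeff_coe, if_pos hn]
  exact IsNilpotent.zero

theorem truncLT_mem_negCoeffNilpotentSubring (c : ℤ) {x : LaurentSeries R}
    (hx : x ∈ negCoeffNilpotentSubring R) : truncLT c x ∈ negCoeffNilpotentSubring R :=
  fun n hn => by
    rw [HahnSeries.coeff_truncLT]
    split_ifs
    exacts [hx n hn, IsNilpotent.zero]

theorem isNilpotent_truncLT_zero {x : LaurentSeries R} (hx : x ∈ negCoeffNilpotentSubring R) :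
    IsNilpotent (truncLT 0 x) := by
  refine isNilpotent_of_support_finite (support_truncLT_finite 0 x) fun n => ?_
  rw [HahnSeries.coeff_truncLT]
  split_ifs with hn
  exacts [hx n hn, IsNilpotent.zero]

theorem negCoeffNilpotentSubring_isUnit_of_isUnit_coeff_zero {x : negCoeffNilpotentSubring R}
    (h0 : IsUnit ((x : LaurentSeries R).coeff 0)) : IsUnit x := by
  let p : PowerSeries R := PowerSeries.mk fun n : ℕ => (x : LaurentSeries R).coeff n
  let incl : PowerSeries R →+* negCoeffNilpotentSubring R :=
    (HahnSeries.ofPowerSeries ℤ R).codRestrict _ coe_powerSeries_mem_negCoeffNilpotentSubring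
  let negPart : negCoeffNilpotentSubring R :=
    ⟨truncLT 0 x, truncLT_mem_negCoeffNilpotentSubring 0 x.2⟩
  have hsplit : x = negPart + incl p :=
    Subtype.ext (truncLT_zero_add_powerSeries_mk (x : LaurentSeries R)).symm
  have hp : IsUnit p := PowerSeries.isUnit_iff_constantCoeff.mpr (by simpa [p] using h0)
  have hneg : IsNilpotent negPart :=
    (IsNilpotent.map_iff (f := (negCoeffNilpotentSubring R).subtype) Subtype.val_injective).mp
      (isNilpotent_truncLT_zero x.2)
  rw [hsplit]
  exact hneg.isUnit_add_right_of_commute (hp.map incl) (Commute.all _ _)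

end LaurentSeries

open LaurentSeries in
/-- Let `R` be a commutative ring and let `f ∈ R((t))` be a formal Laurent
series all of whose coefficients in negative degrees are nilpotent. If the coefficient of
`t⁰` in `f` is a unit of `R`, then `f` is invertible in `R((t))`, and the inverse of `f`
again has all of its coefficients in negative degrees nilpotent; that is, `f` is a unit
of the subring `R((t))^√`. -/
theorem nilLaurent_isUnit_of_coeff_zero_isUnit {R : Type*} [CommRing R]
    (f : LaurentSeries R)
    (hneg : ∀ n : ℤ, n < 0 → IsNilpotent (f.coeff n))
    (h0 : IsUnit (f.coeff 0)) :
    ∃ g : LaurentSeries R, f * g = 1 ∧ g * f = 1 ∧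
      ∀ n : ℤ, n < 0 → IsNilpotent (g.coeff n) := by
  obtain ⟨u, hu⟩ := negCoeffNilpotentSubring_isUnit_of_isUnit_coeff_zero (x := ⟨f, hneg⟩) h0
  let g : negCoeffNilpotentSubring R := ↑u⁻¹
  refine ⟨g, ?_, ?_, g.2⟩
  · simpa [hu] using congrArg Subtype.val u.mul_inv
  · simpa [hu] using congrArg Subtype.val u.inv_mul
end

section
/- Let R be a commutative local ring with maximal ideal m. Then the ring R((t))^√ of Laurent series over R with nilpotent negative coefficients is a local ring: its units are exactly the series whose coefficient of t⁰ is a unit of R, and its maximal ideal is the set of f ∈ R((t))^√ whose coefficient of t⁰ lies in m. -/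
/-!
Write `f = f₊ + f₋`, where `f₊` is the power series of non-negative terms and `f₋ = truncLT 0 f`
collects the finitely many negative terms. For `f` in `R((t))^√` all coefficients of `f₋` are
nilpotent, so `f₋` is nilpotent and multiplying by it changes the constant coefficient only by a
nilpotent. Hence `f ↦ f.coeff 0` is multiplicative modulo nilpotents, which forces `f.coeff 0` to
be a unit when `f` is invertible; conversely, if `f.coeff 0` is a unit then `f₊` is a unit of
`R[[t]]` and `f = f₊ + f₋` is a unit plus a nilpotent inside `R((t))^√`.
-/

/-- The subset `R((t))^√` of the Laurent series ring: series all of whose coefficients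
in negative degrees are nilpotent. -/
def nilLaurentSet (R : Type*) [CommRing R] : Set (LaurentSeries R) :=
  {f | ∀ n : ℤ, n < 0 → IsNilpotent (f.coeff n)}

open HahnSeries

section

variable {R : Type*} [CommRing R]

variable (R) in
def nilLaurentSubring : Subring (LaurentSeries R) where
  carrier := nilLaurentSet R
  zero_mem' _ _ := by simp
  one_mem' n hn := by simp [coeff_one, hn.ne]
  add_mem' hf hg n hn := by
    rw [coeff_add]
    exact Commute.isNilpotent_add (.all _ _) (hf n hn) (hg n hn)
  neg_mem' hf n hn := by
    rw [coeff_neg]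
    exact (hf n hn).neg
  mul_mem' {f g} hf hg n hn := by
    rw [coeff_mul]
    refine isNilpotent_sum fun ij hij ↦ ?_
    rw [Finset.mem_antidiagonal] at hij
    rcases lt_or_ge ij.1 0 with h | h
    · exact Commute.isNilpotent_mul_right (.all _ _) (hf _ h)
    · exact Commute.isNilpotent_mul_left (.all _ _) (hg _ (by omega))

theorem ofPowerSeries_mem_nilLaurentSubring (P : PowerSeries R) :
    ofPowerSeries ℤ R P ∈ nilLaurentSubring R := fun n hn ↦ by
  simp [PowerSeries.coeff_coe, hn]

theorem isNilpotent_single {Γ : Type*} [AddCommMonoid Γ] [PartialOrder Γ]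
    [IsOrderedCancelAddMonoid Γ] {n : Γ} {c : R} (hc : IsNilpotent c) :
    IsNilpotent (single n c : HahnSeries Γ R) := by
  obtain ⟨k, hk⟩ := hc
  exact ⟨k, by rw [single_pow, hk, single_eq_zero]⟩

theorem isNilpotent_coeff_mul_of_isNilpotent_coeff {Γ : Type*} [AddCommMonoid Γ] [PartialOrder Γ]
    [IsOrderedCancelAddMonoid Γ] {f : HahnSeries Γ R} (hf : ∀ n, IsNilpotent (f.coeff n))
    (g : HahnSeries Γ R) (n : Γ) :
    IsNilpotent ((f * g).coeff n) := by
  rw [coeff_mul]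
  exact isNilpotent_sum fun ij _ ↦ Commute.isNilpotent_mul_right (.all _ _) (hf ij.1)

namespace LaurentSeries

theorem coeff_zero_ofPowerSeries (P : PowerSeries R) :
    (ofPowerSeries ℤ R P).coeff 0 = PowerSeries.constantCoeff P := by
  simpa using coeff_coe_powerSeries P 0

def nonnegPart (f : LaurentSeries R) : PowerSeries R :=
  PowerSeries.mk fun n ↦ f.coeff n

@[simp]
theorem constantCoeff_nonnegPart (f : LaurentSeries R) :
    PowerSeries.constantCoeff f.nonnegPart = f.coeff 0 := by
  simp [nonnegPart, ← PowerSeries.coeff_zero_eq_constantCoeff_apply]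

theorem ofPowerSeries_nonnegPart_add_truncLT (f : LaurentSeries R) :
    ofPowerSeries ℤ R f.nonnegPart + truncLT 0 f = f := by
  ext n
  rw [coeff_add, PowerSeries.coeff_coe, HahnSeries.coeff_truncLT]
  split_ifs with hn
  · exact zero_add _
  · simp [nonnegPart, Int.natAbs_of_nonneg (not_lt.mp hn)]

theorem isNilpotent_coeff_truncLT_zero {f : LaurentSeries R} (hf : f ∈ nilLaurentSet R)
    (n : ℤ) : IsNilpotent ((truncLT 0 f).coeff n) := by
  rw [HahnSeries.coeff_truncLT]
  split_ifs with hn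
  · exact hf n hn
  · exact IsNilpotent.zero

theorem isNilpotent_truncLT_zero_s4 {f : LaurentSeries R} (hf : f ∈ nilLaurentSet R) :
    IsNilpotent (truncLT 0 f) := by
  have hsum : truncLT 0 f = ∑ n ∈ Finset.Ico f.order 0, single n (f.coeff n) := by
    ext n
    rw [HahnSeries.coeff_truncLT, coeff_sum]
    rcases lt_or_ge n 0 with hn | hn
    · rw [if_pos hn, Finset.sum_eq_single n (fun m _ hm ↦ coeff_single_of_ne hm.symm),
        coeff_single_same]
      intro hn'
      rw [coeff_single_same, coeff_eq_zero_of_lt_order]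
      simpa [hn] using hn'
    · rw [if_neg hn.not_gt, Finset.sum_eq_zero]
      intro m hm
      exact coeff_single_of_ne (by simp at hm; omega)
  rw [hsum]
  exact isNilpotent_sum fun n hn ↦ isNilpotent_single (hf n (Finset.mem_Ico.mp hn).2)

end LaurentSeries

open LaurentSeries

theorem isNilpotent_coeff_zero_mul_sub_mul {f g : LaurentSeries R} (hf : f ∈ nilLaurentSet R)
    (hg : g ∈ nilLaurentSet R) : IsNilpotent ((f * g).coeff 0 - f.coeff 0 * g.coeff 0) := by
  set P := ofPowerSeries ℤ R f.nonnegPart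
  have hfg : f * g = ofPowerSeries ℤ R (f.nonnegPart * g.nonnegPart) +
      (truncLT 0 f * g + truncLT 0 g * P) := by
    rw [map_mul]
    linear_combination (-g) * ofPowerSeries_nonnegPart_add_truncLT f -
      P * ofPowerSeries_nonnegPart_add_truncLT g
  rw [hfg, coeff_add, coeff_zero_ofPowerSeries, map_mul, constantCoeff_nonnegPart,
    constantCoeff_nonnegPart, add_sub_cancel_left, coeff_add]
  exact Commute.isNilpotent_add (.all _ _)
    (isNilpotent_coeff_mul_of_isNilpotent_coeff (isNilpotent_coeff_truncLT_zero hf) _ _)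
    (isNilpotent_coeff_mul_of_isNilpotent_coeff (isNilpotent_coeff_truncLT_zero hg) _ _)

theorem isUnit_coeff_zero_of_mul_eq_one {f g : LaurentSeries R} (hf : f ∈ nilLaurentSet R)
    (hg : g ∈ nilLaurentSet R) (hfg : f * g = 1) : IsUnit (f.coeff 0) := by
  have h := isNilpotent_coeff_zero_mul_sub_mul hf hg
  rw [hfg, coeff_one, if_pos rfl] at h
  refine isUnit_of_mul_isUnit_left (y := g.coeff 0) ?_
  simpa using h.isUnit_one_sub

theorem isUnit_mk_of_isUnit_coeff_zero {f : LaurentSeries R} (hf : f ∈ nilLaurentSubring R)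
    (hu : IsUnit (f.coeff 0)) : IsUnit (⟨f, hf⟩ : nilLaurentSubring R) := by
  let φ := (ofPowerSeries ℤ R).codRestrict (nilLaurentSubring R)
    ofPowerSeries_mem_nilLaurentSubring
  have hN : truncLT 0 f ∈ nilLaurentSubring R := fun n _ ↦ isNilpotent_coeff_truncLT_zero hf n
  have hφ : IsUnit (φ f.nonnegPart) :=
    (PowerSeries.isUnit_iff_constantCoeff.mpr (by simpa using hu)).map φ
  have hnil : IsNilpotent (⟨truncLT 0 f, hN⟩ : nilLaurentSubring R) :=
    (IsNilpotent.map_iff (nilLaurentSubring R).subtype_injective).mp (isNilpotent_truncLT_zero_s4 hf)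
  have hdecomp : (⟨f, hf⟩ : nilLaurentSubring R) = φ f.nonnegPart + ⟨truncLT 0 f, hN⟩ :=
    Subtype.ext (ofPowerSeries_nonnegPart_add_truncLT f).symm
  rw [hdecomp]
  exact hnil.isUnit_add_left_of_commute hφ (.all _ _)

theorem coeff_zero_mul_mem_of_isPrime (p : Ideal R) [p.IsPrime] {f g : LaurentSeries R}
    (hf : f ∈ nilLaurentSet R) (hg : g ∈ nilLaurentSet R) (hg0 : g.coeff 0 ∈ p) :
    (f * g).coeff 0 ∈ p := by
  have h := nilradical_le_prime p (mem_nilradical.mpr (isNilpotent_coeff_zero_mul_sub_mul hf hg))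
  simpa using p.add_mem h (p.mul_mem_left (f.coeff 0) hg0)

end

/-- Let `R` be a commutative local ring with maximal ideal `m`. Then the ring
`R((t))^√` of Laurent series over `R` with nilpotent negative coefficients is a local ring:
its units are exactly the series whose coefficient of `t⁰` is a unit of `R`, and its
maximal ideal is the set of `f ∈ R((t))^√` whose coefficient of `t⁰` lies in `m`. -/
theorem nilLaurent_isLocalRing {R : Type*} [CommRing R] [IsLocalRing R] :
    (∀ f ∈ nilLaurentSet R,
      ((∃ g ∈ nilLaurentSet R, f * g = 1) ↔ IsUnit (f.coeff 0))) ∧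
    (∀ f ∈ nilLaurentSet R,
      (f.coeff 0 ∈ IsLocalRing.maximalIdeal R ↔ ¬ ∃ g ∈ nilLaurentSet R, f * g = 1)) ∧
    ((0 : LaurentSeries R) ∈ nilLaurentSet R ∧
      (0 : LaurentSeries R).coeff 0 ∈ IsLocalRing.maximalIdeal R) ∧
    ((1 : LaurentSeries R) ∈ nilLaurentSet R ∧
      (1 : LaurentSeries R).coeff 0 ∉ IsLocalRing.maximalIdeal R) ∧
    (∀ f ∈ nilLaurentSet R, ∀ g ∈ nilLaurentSet R,
      f.coeff 0 ∈ IsLocalRing.maximalIdeal R → g.coeff 0 ∈ IsLocalRing.maximalIdeal R →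
        (f + g) ∈ nilLaurentSet R ∧ (f + g).coeff 0 ∈ IsLocalRing.maximalIdeal R) ∧
    (∀ f ∈ nilLaurentSet R, ∀ g ∈ nilLaurentSet R,
      g.coeff 0 ∈ IsLocalRing.maximalIdeal R →
        (f * g) ∈ nilLaurentSet R ∧ (f * g).coeff 0 ∈ IsLocalRing.maximalIdeal R) := by
  have hunits (f) (hf : f ∈ nilLaurentSet R) :
      (∃ g ∈ nilLaurentSet R, f * g = 1) ↔ IsUnit (f.coeff 0) := by
    refine ⟨fun ⟨g, hg, hfg⟩ ↦ isUnit_coeff_zero_of_mul_eq_one hf hg hfg, fun hu ↦ ?_⟩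
    obtain ⟨g, hfg⟩ := (isUnit_mk_of_isUnit_coeff_zero hf hu).exists_right_inv
    exact ⟨g, g.2, congrArg Subtype.val hfg⟩
  refine ⟨hunits, fun f hf ↦ ?_, ⟨(nilLaurentSubring R).zero_mem, by simp⟩,
    ⟨(nilLaurentSubring R).one_mem, by simp [coeff_one]⟩,
    fun f hf g hg hf0 hg0 ↦ ⟨(nilLaurentSubring R).add_mem hf hg, ?_⟩,
    fun f hf g hg hg0 ↦ ⟨(nilLaurentSubring R).mul_mem hf hg,
      coeff_zero_mul_mem_of_isPrime _ hf hg hg0⟩⟩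
  · rw [hunits f hf, IsLocalRing.mem_maximalIdeal, mem_nonunits_iff]
  · rw [coeff_add]
    exact add_mem hf0 hg0
end

section
/- Let R be a commutative ℂ-algebra and let f₁, …, f_r ∈ R((t))^√. Then there exist natural numbers N and d such that every element g of the ℂ-subalgebra of R((t)) generated by f₁, …, f_r satisfies: the coefficient of tⁿ in g is 0 for every n < −N, and the coefficient of tⁿ in g raised to the power d equals 0 for every n < 0. In other words, every finitely generated ℂ-subalgebra of R((t))^√ has uniformly bounded pole order and uniformly bounded order of nilpotency of its negative coefficients. -/
/-!
Let `t^N` bound the poles of the generators and let `I` be the ideal spanned by their negative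
coefficients; `I` is finitely generated by nilpotents, so `I ^ d = 0` for some `d`. With
`w(n) = ⌈max(-n, 0) / (N + 1)⌉`, the series whose `n`-th coefficient lies in `I ^ w(n)` form a
subalgebra, because `w` is subadditive. It contains the generators, hence the whole adjoined
subalgebra, and `w(n) ≥ 1` for `n < 0` while `w(n) > d` for `n < -(N + 1) d`.
-/

namespace LaurentSeries

def poleWeight (N : ℕ) (n : ℤ) : ℕ := (-n).toNat ⌈/⌉ N

theorem poleWeight_le_iff {N : ℕ} (hN : 0 < N) {n : ℤ} {k : ℕ} :
    poleWeight N n ≤ k ↔ -n ≤ (N * k : ℕ) := by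
  rw [poleWeight, ceilDiv_le_iff_le_mul hN]
  omega

theorem poleWeight_of_nonneg (N : ℕ) {n : ℤ} (hn : 0 ≤ n) : poleWeight N n = 0 := by
  simp [poleWeight, Int.toNat_eq_zero.2 (neg_nonpos.2 hn)]

theorem poleWeight_add_le {N : ℕ} (hN : 0 < N) (a b : ℤ) :
    poleWeight N (a + b) ≤ poleWeight N a + poleWeight N b := by
  have ha := (poleWeight_le_iff hN (n := a)).1 le_rfl
  have hb := (poleWeight_le_iff hN (n := b)).1 le_rfl
  rw [poleWeight_le_iff hN]
  push_cast at *
  linarith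

variable (A : Type*) {R : Type*} [CommSemiring A] [CommSemiring R] [Algebra A R]

def idealPoleSubalgebra (I : Ideal R) {N : ℕ} (hN : 0 < N) : Subalgebra A (LaurentSeries R) where
  carrier := {g | ∀ n, g.coeff n ∈ I ^ poleWeight N n}
  mul_mem' {x y} hx hy n := by
    rw [HahnSeries.coeff_mul]
    refine Ideal.sum_mem _ fun ab hab => ?_
    obtain ⟨-, -, rfl⟩ := Finset.mem_antidiagonal.1 hab
    exact Ideal.pow_le_pow_right (poleWeight_add_le hN _ _)
      (pow_add I _ _ ▸ Ideal.mul_mem_mul (hx _) (hy _))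
  add_mem' hx hy n := by
    rw [HahnSeries.coeff_add]
    exact add_mem (hx n) (hy n)
  algebraMap_mem' c n := by
    rcases lt_or_ge n 0 with hn | hn
    · rw [HahnSeries.algebraMap_apply', PowerSeries.coeff_coe, if_pos hn]
      exact zero_mem _
    · rw [poleWeight_of_nonneg N hn, pow_zero, Ideal.one_eq_top]
      exact Submodule.mem_top

variable {A} {I : Ideal R} {N : ℕ} {hN : 0 < N}

theorem mem_idealPoleSubalgebra_of_coeff {g : LaurentSeries R}
    (hpole : ∀ n : ℤ, n < -(N : ℤ) → g.coeff n = 0) (hneg : ∀ n : ℤ, n < 0 → g.coeff n ∈ I) :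
    g ∈ idealPoleSubalgebra A I hN := by
  intro n
  rcases le_or_gt 0 n with hn | hn
  · simp [poleWeight_of_nonneg N hn]
  rcases lt_or_ge n (-(N : ℤ)) with hnN | hnN
  · simp [hpole n hnN]
  · have h1 : poleWeight N n ≤ 1 := (poleWeight_le_iff hN).2 (by push_cast; omega)
    exact Ideal.pow_le_pow_right h1 (by simpa using hneg n hn)

theorem coeff_mem_pow_succ_of_mem_idealPoleSubalgebra {g : LaurentSeries R}
    (hg : g ∈ idealPoleSubalgebra A I hN) {n : ℤ} {k : ℕ} (hn : n < -(N * k : ℕ)) :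
    g.coeff n ∈ I ^ (k + 1) := by
  have hk : k + 1 ≤ poleWeight N n := by
    by_contra! h
    have := (poleWeight_le_iff hN (n := n) (k := k)).1 (by omega)
    omega
  exact Ideal.pow_le_pow_right hk (hg n)

theorem exists_forall_coeff_eq_zero_of_lt_neg {ι R : Type*} [Finite ι] [Zero R]
    (f : ι → LaurentSeries R) : ∃ N : ℕ, ∀ i n, n < -(N : ℤ) → (f i).coeff n = 0 := by
  obtain ⟨N, hN⟩ := Finite.exists_le fun i => (-(f i).order).toNat
  exact ⟨N, fun i n hn => HahnSeries.coeff_eq_zero_of_lt_order (by have := hN i; omega)⟩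

end LaurentSeries

/-- Let `R` be a commutative ℂ-algebra and let `f₁, …, f_r ∈ R((t))^√`.
Then there exist natural numbers `N` and `d` such that every element `g` of the
ℂ-subalgebra of `R((t))` generated by `f₁, …, f_r` satisfies: the coefficient of `tⁿ`
in `g` is `0` for every `n < −N`, and the `d`-th power of the coefficient of `tⁿ` in `g`
is `0` for every `n < 0`. -/
theorem adjoin_nilLaurent_uniform_bounds {R : Type*} [CommRing R] [Algebra ℂ R]
    {r : ℕ} (f : Fin r → LaurentSeries R)
    (hf : ∀ i : Fin r, ∀ n : ℤ, n < 0 → IsNilpotent ((f i).coeff n)) :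
    ∃ N d : ℕ, ∀ g ∈ Algebra.adjoin ℂ (Set.range f),
      (∀ n : ℤ, n < -(N : ℤ) → g.coeff n = 0) ∧
      (∀ n : ℤ, n < 0 → g.coeff n ^ d = 0) := by
  obtain ⟨N, hpole⟩ := LaurentSeries.exists_forall_coeff_eq_zero_of_lt_neg f
  set I : Ideal R := Ideal.span (⋃ i, (f i).coeff '' Set.Icc (-(N : ℤ)) (-1))
  have hcoeff (i : Fin r) (n : ℤ) (hn : n < 0) : (f i).coeff n ∈ I := by
    rcases lt_or_ge n (-(N : ℤ)) with hnN | hnN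
    · simp [hpole i n hnN]
    · exact Ideal.subset_span (Set.mem_iUnion.2 ⟨i, n, ⟨hnN, by omega⟩, rfl⟩)
  have hI_fg : I.FG := Submodule.fg_span (Set.finite_iUnion fun i => (Set.finite_Icc _ _).image _)
  have hI_nil : I ≤ nilradical R := Ideal.span_le.2 <| by
    rintro _ ⟨_, ⟨i, rfl⟩, n, hn, rfl⟩
    exact hf i n (by linarith [hn.2])
  obtain ⟨d, hd : I ^ d = ⊥⟩ := hI_fg.isNilpotent_iff_le_nilradical.2 hI_nil
  have hadjoin :
      Algebra.adjoin ℂ (Set.range f) ≤ LaurentSeries.idealPoleSubalgebra ℂ I N.succ_pos :=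
    Algebra.adjoin_le <| Set.range_subset_iff.2 fun i =>
      LaurentSeries.mem_idealPoleSubalgebra_of_coeff (fun n hn => hpole i n (by omega)) (hcoeff i)
  refine ⟨(N + 1) * d, d, fun g hg => ⟨fun n hn => ?_, fun n hn => ?_⟩⟩
  · have hmem := LaurentSeries.coeff_mem_pow_succ_of_mem_idealPoleSubalgebra (hadjoin hg) hn
    exact (Submodule.mem_bot R).1 (hd ▸ Ideal.pow_le_pow_right d.le_succ hmem)
  · have hmem : g.coeff n ∈ I := by
      simpa using LaurentSeries.coeff_mem_pow_succ_of_mem_idealPoleSubalgebra (k := 0)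
        (hadjoin hg) (by simpa using hn)
    exact (Submodule.mem_bot R).1 (hd ▸ Ideal.pow_mem_pow hmem d)
end

section
/- Let V^{i,j} (for i, j ≥ 0; set V^{i,j} = 0 if i < 0 or j < 0) be ℂ-vector spaces with linear maps D₁ : V^{i,j} → V^{i+1,j}, D₂ : V^{i,j} → V^{i,j+1} satisfying D₁² = 0, D₂² = 0, D₁D₂ + D₂D₁ = 0; linear maps h₁ : V^{i,j} → V^{i−1,j} with D₁h₁ + h₁D₁ equal to multiplication by j on V^{i,j}; linear maps h₂ : V^{i,j} → V^{i,j−1} with D₂h₂ + h₂D₂ equal to multiplication by i on V^{i,j}; and linear isomorphisms σ : V^{i,j} → V^{j,i} with σ ∘ σ = id and σ ∘ D₁ = D₂ ∘ σ on every V^{i,j}. Fix an integer p ≥ 1. Let K^q = ker(D₁ : V^{p,q} → V^{p+1,q}); then D₂ restricts to maps K^q → K^{q+1}, giving a complex (K^•, D₂). Let T^• be the complex with T^0 = ker(D₂ : V^{0,p} → V^{0,p+1}), T^m = V^{0,p+m−1} for m ≥ 1, whose differential T^0 → T^1 is the inclusion and whose differential T^m → T^{m+1} for m ≥ 1 is D₂.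 Then for every n ≥ 0 the n-th cohomology of (K^•, D₂) is isomorphic, as a ℂ-vector space, to the n-th cohomology of T^•. -/
/-!
For `p ≥ 1` the column `V^{p,•}` is `D₂`-acyclic, since `h₂ / p` contracts it, and in every row
`j ≥ 1` the map `D₁` sends `V^{p,j}` onto the `D₁`-closed part of `V^{p+1,j}`, with section
`h₁ / j`. So `0 → K_p → V^{p,•} → K_{p+1} → 0` is exact in positive degrees, and its connecting map
`D₂ ∘ (h₁ / j)` identifies `H^n(K_{p+1})` with `H^{n+1}(K_p)` for `n ≥ 2`. In column `0` the map
`D₁` is injective in positive degrees, so it identifies `V^{0,•}` with `K_1` there. Descending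
from column `p` to column `1` gives `H^{m+2}(K_p) ≅ H^{p+m+1}(K_1) ≅ H^{p+m+1}(V^{0,•})`; in
degrees `0` and `1` both sides vanish.
-/

/-- The cohomology (cocycles modulo coboundaries) attached to a submodule `Z` of cocycles
and a submodule `B` of coboundaries inside an ambient module `M`. -/
noncomputable abbrev cohomologyOf {M : Type*} [AddCommGroup M] [Module ℂ M]
    (Z B : Submodule ℂ M) : Type _ :=
  Z ⧸ Submodule.comap Z.subtype B

open LinearMap (ker range)

section Cohomology

variable {M N : Type*} [AddCommGroup M] [Module ℂ M] [AddCommGroup N] [Module ℂ N]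
  {Z B : Submodule ℂ M} {Z' B' : Submodule ℂ N}

theorem subsingleton_cohomologyOf_iff : Subsingleton (cohomologyOf Z B) ↔ Z ≤ B := by
  rw [Submodule.Quotient.subsingleton_iff, Submodule.comap_subtype_eq_top]

theorem nonempty_cohomologyOf_equiv_of_le (h : Z ≤ B) (h' : Z' ≤ B') :
    Nonempty (cohomologyOf Z B ≃ₗ[ℂ] cohomologyOf Z' B') :=
  have := subsingleton_cohomologyOf_iff.mpr h
  have := subsingleton_cohomologyOf_iff.mpr h'
  ⟨.ofSubsingleton _ _⟩

noncomputable def cohomologyOfMap (f : M →ₗ[ℂ] N) (hZ : ∀ x ∈ Z, f x ∈ Z')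
    (hB : ∀ x ∈ Z, x ∈ B → f x ∈ B') : cohomologyOf Z B →ₗ[ℂ] cohomologyOf Z' B' :=
  Submodule.mapQ _ _ (f.restrict hZ) fun x hx => hB x x.2 hx

theorem cohomologyOfMap_mk (f : M →ₗ[ℂ] N) (hZ : ∀ x ∈ Z, f x ∈ Z')
    (hB : ∀ x ∈ Z, x ∈ B → f x ∈ B') (x : Z) :
    cohomologyOfMap f hZ hB (Submodule.Quotient.mk x) = Submodule.Quotient.mk ⟨f x, hZ x x.2⟩ :=
  rfl

theorem cohomologyOfMap_bijective (f : M →ₗ[ℂ] N) (hZ : ∀ x ∈ Z, f x ∈ Z')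
    (hB : ∀ x ∈ Z, x ∈ B → f x ∈ B') (hinj : ∀ x ∈ Z, f x ∈ B' → x ∈ B)
    (hsurj : ∀ y ∈ Z', ∃ x ∈ Z, f x - y ∈ B') :
    Function.Bijective (cohomologyOfMap f hZ hB) := by
  refine ⟨(injective_iff_map_eq_zero _).mpr fun c hc => ?_, fun c => ?_⟩
  · induction c using Submodule.Quotient.induction_on with | H x => ?_
    rw [cohomologyOfMap_mk, Submodule.Quotient.mk_eq_zero] at hc
    rw [Submodule.Quotient.mk_eq_zero]
    exact hinj x x.2 hc
  · induction c using Submodule.Quotient.induction_on with | H y => ?_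
    obtain ⟨x, hx, hxy⟩ := hsurj y y.2
    exact ⟨Submodule.Quotient.mk ⟨x, hx⟩, by
      rw [cohomologyOfMap_mk, Submodule.Quotient.eq]; exact hxy⟩

end Cohomology

section Bicomplex

variable {V : ℕ → ℕ → Type*} [∀ i j, AddCommGroup (V i j)] [∀ i j, Module ℂ (V i j)]
  {D₁ : ∀ i j, V i j →ₗ[ℂ] V (i + 1) j} {D₂ : ∀ i j, V i j →ₗ[ℂ] V i (j + 1)}
  {h₁ : ∀ i j, V (i + 1) j →ₗ[ℂ] V i j} {h₂ : ∀ i j, V i (j + 1) →ₗ[ℂ] V i j}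

variable (D₁ D₂) in
/-- The cohomology in degree `q + 1` of the complex of `D₁`-closed elements of column `p`. -/
abbrev closedColumnCohomology (p q : ℕ) : Type _ :=
  cohomologyOf (ker (D₁ p (q + 1)) ⊓ ker (D₂ p (q + 1))) ((ker (D₁ p q)).map (D₂ p q))

variable (D₂) in
/-- The cohomology in degree `q + 1` of column `i`. -/
abbrev columnCohomology (i q : ℕ) : Type _ :=
  cohomologyOf (ker (D₂ i (q + 1))) (range (D₂ i q))

theorem D₂_D₁_eq_neg
    (hanti : ∀ i j (v : V i j), D₁ i (j + 1) (D₂ i j v) + D₂ (i + 1) j (D₁ i j v) = 0)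
    {i j : ℕ} (v : V i j) : D₂ (i + 1) j (D₁ i j v) = -D₁ i (j + 1) (D₂ i j v) :=
  eq_neg_of_add_eq_zero_right (hanti i j v)

theorem D₁_inv_smul_h₁
    (hh₁ : ∀ i j (v : V (i + 1) j),
      D₁ i j (h₁ i j v) + h₁ (i + 1) j (D₁ (i + 1) j v) = (j : ℂ) • v)
    {i j : ℕ} (hj : j ≠ 0) {v : V (i + 1) j} (hv : D₁ (i + 1) j v = 0) :
    D₁ i j ((j : ℂ)⁻¹ • h₁ i j v) = v := by
  have := hh₁ i j v
  rw [hv, map_zero, add_zero] at this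
  rw [map_smul, this, inv_smul_smul₀ (Nat.cast_ne_zero.mpr hj)]

theorem exact_D₁ (hD₁ : ∀ i j (v : V i j), D₁ (i + 1) j (D₁ i j v) = 0)
    (hh₁ : ∀ i j (v : V (i + 1) j),
      D₁ i j (h₁ i j v) + h₁ (i + 1) j (D₁ (i + 1) j v) = (j : ℂ) • v)
    {i j : ℕ} (hj : j ≠ 0) : Function.Exact (D₁ i j) (D₁ (i + 1) j) := fun v =>
  ⟨fun hv => ⟨_, D₁_inv_smul_h₁ hh₁ hj hv⟩, by rintro ⟨u, rfl⟩; exact hD₁ i j u⟩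

theorem exact_D₂ (hD₂ : ∀ i j (v : V i j), D₂ i (j + 1) (D₂ i j v) = 0)
    (hh₂ : ∀ i j (v : V i (j + 1)),
      D₂ i j (h₂ i j v) + h₂ i (j + 1) (D₂ i (j + 1) v) = (i : ℂ) • v)
    {i j : ℕ} (hi : i ≠ 0) : Function.Exact (D₂ i j) (D₂ i (j + 1)) := by
  refine fun v => ⟨fun hv => ⟨(i : ℂ)⁻¹ • h₂ i j v, ?_⟩, by rintro ⟨u, rfl⟩; exact hD₂ i j u⟩
  have := hh₂ i j v
  rw [hv, map_zero, add_zero] at this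
  rw [map_smul, this, inv_smul_smul₀ (Nat.cast_ne_zero.mpr hi)]

theorem D₁_zero_injective (hh₁0 : ∀ j (v : V 0 j), h₁ 0 j (D₁ 0 j v) = (j : ℂ) • v)
    {j : ℕ} (hj : j ≠ 0) : Function.Injective (D₁ 0 j) :=
  (injective_iff_map_eq_zero _).mpr fun v hv => by
    simpa [hv, Nat.cast_ne_zero.mpr hj] using (hh₁0 j v).symm

theorem D₂_zero_injective (hh₂0 : ∀ i (v : V i 0), h₂ i 0 (D₂ i 0 v) = (i : ℂ) • v)
    {i : ℕ} (hi : i ≠ 0) : Function.Injective (D₂ i 0) :=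
  (injective_iff_map_eq_zero _).mpr fun v hv => by
    simpa [hv, Nat.cast_ne_zero.mpr hi] using (hh₂0 i v).symm

theorem nonempty_columnCohomology_zero_equiv_closedColumnCohomology_one
    (hD₁ : ∀ i j (v : V i j), D₁ (i + 1) j (D₁ i j v) = 0)
    (hanti : ∀ i j (v : V i j), D₁ i (j + 1) (D₂ i j v) + D₂ (i + 1) j (D₁ i j v) = 0)
    (hh₁ : ∀ i j (v : V (i + 1) j),
      D₁ i j (h₁ i j v) + h₁ (i + 1) j (D₁ (i + 1) j v) = (j : ℂ) • v)
    (hh₁0 : ∀ j (v : V 0 j), h₁ 0 j (D₁ 0 j v) = (j : ℂ) • v) (q : ℕ) :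
    Nonempty (columnCohomology D₂ 0 (q + 1) ≃ₗ[ℂ] closedColumnCohomology D₁ D₂ 1 (q + 1)) := by
  have hZ : ∀ u ∈ ker (D₂ 0 (q + 2)), D₁ 0 (q + 2) u ∈ ker (D₁ 1 (q + 2)) ⊓ ker (D₂ 1 (q + 2)) :=
    fun u hu => ⟨hD₁ 0 _ u, by simp_all [D₂_D₁_eq_neg hanti u]⟩
  have hB : ∀ u ∈ ker (D₂ 0 (q + 2)), u ∈ range (D₂ 0 (q + 1)) →
      D₁ 0 (q + 2) u ∈ (ker (D₁ 1 (q + 1))).map (D₂ 1 (q + 1)) := by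
    rintro _ - ⟨t, rfl⟩
    exact ⟨-D₁ 0 (q + 1) t, by simp [hD₁], by simp [D₂_D₁_eq_neg hanti t]⟩
  refine ⟨.ofBijective (cohomologyOfMap (D₁ 0 (q + 2)) hZ hB)
    (cohomologyOfMap_bijective _ hZ hB ?_ ?_)⟩
  · rintro u hu ⟨w, hw, hwu⟩
    obtain ⟨t, rfl⟩ := (exact_D₁ hD₁ hh₁ q.add_one_ne_zero w).mp hw
    have : u + D₂ 0 (q + 1) t = 0 := D₁_zero_injective hh₁0 (q + 1).add_one_ne_zero <| by
      rw [map_add, ← hwu, map_zero]; exact (add_comm _ _).trans (hanti 0 (q + 1) t)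
    exact ⟨-t, by rw [map_neg, ← eq_neg_of_add_eq_zero_left this]⟩
  · rintro x ⟨hx₁, hx₂⟩
    obtain ⟨u, rfl⟩ := (exact_D₁ hD₁ hh₁ (q + 1).add_one_ne_zero x).mp hx₁
    refine ⟨u, D₁_zero_injective hh₁0 (q + 2).add_one_ne_zero ?_, by simp⟩
    rw [map_zero, ← neg_eq_zero, ← D₂_D₁_eq_neg hanti u]
    exact hx₂

theorem nonempty_closedColumnCohomology_succ_equiv
    (hD₁ : ∀ i j (v : V i j), D₁ (i + 1) j (D₁ i j v) = 0)
    (hD₂ : ∀ i j (v : V i j), D₂ i (j + 1) (D₂ i j v) = 0)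
    (hanti : ∀ i j (v : V i j), D₁ i (j + 1) (D₂ i j v) + D₂ (i + 1) j (D₁ i j v) = 0)
    (hh₁ : ∀ i j (v : V (i + 1) j),
      D₁ i j (h₁ i j v) + h₁ (i + 1) j (D₁ (i + 1) j v) = (j : ℂ) • v)
    (hh₂ : ∀ i j (v : V i (j + 1)),
      D₂ i j (h₂ i j v) + h₂ i (j + 1) (D₂ i (j + 1) v) = (i : ℂ) • v)
    {p : ℕ} (hp : p ≠ 0) (q : ℕ) :
    Nonempty (closedColumnCohomology D₁ D₂ (p + 1) (q + 1) ≃ₗ[ℂ]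
      closedColumnCohomology D₁ D₂ p (q + 2)) := by
  set L : V (p + 1) (q + 2) →ₗ[ℂ] V p (q + 2) := ((q + 2 : ℕ) : ℂ)⁻¹ • h₁ p (q + 2)
  have hL : ∀ x, D₁ (p + 1) (q + 2) x = 0 → D₁ p (q + 2) (L x) = x :=
    fun _ => D₁_inv_smul_h₁ hh₁ (q + 1).add_one_ne_zero
  have hZ : ∀ x ∈ ker (D₁ (p + 1) (q + 2)) ⊓ ker (D₂ (p + 1) (q + 2)),
      D₂ p (q + 2) (L x) ∈ ker (D₁ p (q + 3)) ⊓ ker (D₂ p (q + 3)) := by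
    rintro x ⟨hx₁, hx₂⟩
    refine ⟨?_, hD₂ p (q + 2) (L x)⟩
    have := hanti p (q + 2) (L x)
    rw [hL x hx₁, hx₂, add_zero] at this
    exact this
  have hB : ∀ x ∈ ker (D₁ (p + 1) (q + 2)) ⊓ ker (D₂ (p + 1) (q + 2)),
      x ∈ (ker (D₁ (p + 1) (q + 1))).map (D₂ (p + 1) (q + 1)) →
      D₂ p (q + 2) (L x) ∈ (ker (D₁ p (q + 2))).map (D₂ p (q + 2)) := by
    rintro x ⟨hx₁, -⟩ ⟨w, hw, rfl⟩
    obtain ⟨u, rfl⟩ := (exact_D₁ hD₁ hh₁ q.add_one_ne_zero w).mp hw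
    refine ⟨L (D₂ (p + 1) (q + 1) (D₁ p (q + 1) u)) + D₂ p (q + 1) u, ?_, by simp [hD₂]⟩
    have := hanti p (q + 1) u
    simp only [SetLike.mem_coe, LinearMap.mem_ker, map_add, hL _ hx₁]
    exact (add_comm _ _).trans this
  refine ⟨.ofBijective (cohomologyOfMap (D₂ p (q + 2) ∘ₗ L) hZ hB)
    (cohomologyOfMap_bijective _ hZ hB ?_ ?_)⟩
  · rintro x ⟨hx₁, -⟩ ⟨z, hz, hzx⟩
    obtain ⟨t, ht⟩ := (exact_D₂ hD₂ hh₂ hp (L x - z)).mp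
      (by rw [map_sub]; exact sub_eq_zero.mpr hzx.symm)
    refine ⟨-D₁ p (q + 1) t, by simp [hD₁], ?_⟩
    rw [map_neg, D₂_D₁_eq_neg hanti, neg_neg, ht, map_sub, hL x hx₁, hz, sub_zero]
  · rintro x ⟨hx₁, hx₂⟩
    obtain ⟨t, rfl⟩ := (exact_D₂ hD₂ hh₂ hp x).mp hx₂
    have hv₁ : D₁ (p + 1) (q + 2) (D₁ p (q + 2) t) = 0 := hD₁ p (q + 2) t
    refine ⟨D₁ p (q + 2) t, ⟨hv₁, ?_⟩, L (D₁ p (q + 2) t) - t, by simp [hL _ hv₁], by simp⟩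
    rw [SetLike.mem_coe, LinearMap.mem_ker, D₂_D₁_eq_neg hanti t, neg_eq_zero]
    exact hx₁

theorem nonempty_closedColumnCohomology_equiv_columnCohomology
    (hD₁ : ∀ i j (v : V i j), D₁ (i + 1) j (D₁ i j v) = 0)
    (hD₂ : ∀ i j (v : V i j), D₂ i (j + 1) (D₂ i j v) = 0)
    (hanti : ∀ i j (v : V i j), D₁ i (j + 1) (D₂ i j v) + D₂ (i + 1) j (D₁ i j v) = 0)
    (hh₁ : ∀ i j (v : V (i + 1) j),
      D₁ i j (h₁ i j v) + h₁ (i + 1) j (D₁ (i + 1) j v) = (j : ℂ) • v)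
    (hh₁0 : ∀ j (v : V 0 j), h₁ 0 j (D₁ 0 j v) = (j : ℂ) • v)
    (hh₂ : ∀ i j (v : V i (j + 1)),
      D₂ i j (h₂ i j v) + h₂ i (j + 1) (D₂ i (j + 1) v) = (i : ℂ) • v)
    {p : ℕ} (hp : 1 ≤ p) (m : ℕ) :
    Nonempty (closedColumnCohomology D₁ D₂ p (m + 1) ≃ₗ[ℂ] columnCohomology D₂ 0 (p + m)) := by
  induction p, hp using Nat.le_induction generalizing m with
  | base =>
    obtain ⟨e⟩ :=
      nonempty_columnCohomology_zero_equiv_closedColumnCohomology_one hD₁ hanti hh₁ hh₁0 m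
    rw [Nat.add_comm 1 m]
    exact ⟨e.symm⟩
  | succ p hp ih =>
    obtain ⟨e₁⟩ := nonempty_closedColumnCohomology_succ_equiv hD₁ hD₂ hanti hh₁ hh₂
      (Nat.one_le_iff_ne_zero.mp hp) m
    obtain ⟨e₂⟩ := ih (m + 1)
    rw [Nat.add_right_comm]
    exact ⟨e₁.trans e₂⟩

theorem ker_D₁_inf_ker_D₂_one_le_map
    (hD₂ : ∀ i j (v : V i j), D₂ i (j + 1) (D₂ i j v) = 0)
    (hanti : ∀ i j (v : V i j), D₁ i (j + 1) (D₂ i j v) + D₂ (i + 1) j (D₁ i j v) = 0)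
    (hh₂ : ∀ i j (v : V i (j + 1)),
      D₂ i j (h₂ i j v) + h₂ i (j + 1) (D₂ i (j + 1) v) = (i : ℂ) • v)
    (hh₂0 : ∀ i (v : V i 0), h₂ i 0 (D₂ i 0 v) = (i : ℂ) • v) {p : ℕ} (hp : p ≠ 0) :
    ker (D₁ p 1) ⊓ ker (D₂ p 1) ≤ (ker (D₁ p 0)).map (D₂ p 0) := by
  rintro v ⟨hv₁, hv₂⟩
  obtain ⟨t, rfl⟩ := (exact_D₂ hD₂ hh₂ hp v).mp hv₂
  refine ⟨t, D₂_zero_injective hh₂0 p.add_one_ne_zero ?_, rfl⟩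
  rw [map_zero, D₂_D₁_eq_neg hanti t, neg_eq_zero]
  exact hv₁

end Bicomplex

theorem closed_column_cohomology_iso_truncation_general (V : ℕ → ℕ → Type*)
    [∀ i j, AddCommGroup (V i j)] [∀ i j, Module ℂ (V i j)]
    (D₁ : ∀ i j, V i j →ₗ[ℂ] V (i + 1) j) (D₂ : ∀ i j, V i j →ₗ[ℂ] V i (j + 1))
    (h₁ : ∀ i j, V (i + 1) j →ₗ[ℂ] V i j) (h₂ : ∀ i j, V i (j + 1) →ₗ[ℂ] V i j)
    (hD₁ : ∀ i j (v : V i j), D₁ (i + 1) j (D₁ i j v) = 0)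
    (hD₂ : ∀ i j (v : V i j), D₂ i (j + 1) (D₂ i j v) = 0)
    (hanti : ∀ i j (v : V i j), D₁ i (j + 1) (D₂ i j v) + D₂ (i + 1) j (D₁ i j v) = 0)
    (hh₁ : ∀ i j (v : V (i + 1) j),
      D₁ i j (h₁ i j v) + h₁ (i + 1) j (D₁ (i + 1) j v) = (j : ℂ) • v)
    (hh₁0 : ∀ j (v : V 0 j), h₁ 0 j (D₁ 0 j v) = (j : ℂ) • v)
    (hh₂ : ∀ i j (v : V i (j + 1)),
      D₂ i j (h₂ i j v) + h₂ i (j + 1) (D₂ i (j + 1) v) = (i : ℂ) • v)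
    (hh₂0 : ∀ i (v : V i 0), h₂ i 0 (D₂ i 0 v) = (i : ℂ) • v)
    (p : ℕ) (hp : 1 ≤ p) :
    -- `D₂` restricts to maps `K^q → K^{q+1}` :
    (∀ q (v : V p q), D₁ p q v = 0 → D₁ p (q + 1) (D₂ p q v) = 0) ∧
    -- cohomology degree `n = 0` :
    Nonempty
      (cohomologyOf (LinearMap.ker (D₁ p 0) ⊓ LinearMap.ker (D₂ p 0))
          (⊥ : Submodule ℂ (V p 0)) ≃ₗ[ℂ]
        cohomologyOf (LinearMap.ker (LinearMap.ker (D₂ 0 p)).subtype)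
          (⊥ : Submodule ℂ (LinearMap.ker (D₂ 0 p)))) ∧
    -- cohomology degree `n = 1` :
    Nonempty
      (cohomologyOf (LinearMap.ker (D₁ p 1) ⊓ LinearMap.ker (D₂ p 1))
          (Submodule.map (D₂ p 0) (LinearMap.ker (D₁ p 0))) ≃ₗ[ℂ]
        cohomologyOf (LinearMap.ker (D₂ 0 p))
          (LinearMap.range (LinearMap.ker (D₂ 0 p)).subtype)) ∧
    -- cohomology degrees `n = m + 2` :
    (∀ m : ℕ, Nonempty
      (cohomologyOf (LinearMap.ker (D₁ p (m + 2)) ⊓ LinearMap.ker (D₂ p (m + 2)))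
          (Submodule.map (D₂ p (m + 1)) (LinearMap.ker (D₁ p (m + 1)))) ≃ₗ[ℂ]
        cohomologyOf (LinearMap.ker (D₂ 0 (p + m + 1)))
          (LinearMap.range (D₂ 0 (p + m))))) := by
  have hp₀ : p ≠ 0 := Nat.one_le_iff_ne_zero.mp hp
  refine ⟨fun q v hv => by simpa [hv] using hanti p q v, ?_, ?_,
    nonempty_closedColumnCohomology_equiv_columnCohomology hD₁ hD₂ hanti hh₁ hh₁0 hh₂ hp⟩
  · exact nonempty_cohomologyOf_equiv_of_le
      (inf_le_right.trans (LinearMap.ker_eq_bot.mpr (D₂_zero_injective hh₂0 hp₀)).le)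
      (Submodule.ker_subtype _).le
  · exact nonempty_cohomologyOf_equiv_of_le
      (ker_D₁_inf_ker_D₂_one_le_map hD₂ hanti hh₂ hh₂0 hp₀) (Submodule.range_subtype _).ge

/-- Let `V^{i,j}` (`i, j ≥ 0`, zero outside the first quadrant) be an `N = 2`
supersymmetric complex of ℂ-vector spaces: anticommuting square-zero differentials `D₁`
(bidegree `(1,0)`) and `D₂` (bidegree `(0,1)`); homotopies `h₁` (bidegree `(-1,0)`) with
`D₁h₁ + h₁D₁ = j·id` on `V^{i,j}` and `h₂` (bidegree `(0,-1)`) with `D₂h₂ + h₂D₂ = i·id`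
on `V^{i,j}`; and involutions `σ : V^{i,j} → V^{j,i}` with `σσ = id`, `σD₁ = D₂σ`.
Fix `p ≥ 1`.  Let `K^q = ker(D₁ : V^{p,q} → V^{p+1,q})`; then `D₂` restricts to a complex
`(K^•, D₂)`, and for every `n ≥ 0` the `n`-th cohomology of `(K^•, D₂)` is isomorphic, as
a ℂ-vector space, to the `n`-th cohomology of the truncated complex
`T^• = { ker(D₂ : V^{0,p} → V^{0,p+1}) ↪ V^{0,p} → V^{0,p+1} → V^{0,p+2} → ⋯ }`
(the kernel term sitting in degree `0`).  The three conjuncts below treat the cohomology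
degrees `n = 0`, `n = 1` and `n = m + 2`. -/
theorem closed_column_cohomology_iso_truncation (V : ℕ → ℕ → Type*)
    [∀ i j, AddCommGroup (V i j)] [∀ i j, Module ℂ (V i j)]
    (D₁ : ∀ i j, V i j →ₗ[ℂ] V (i + 1) j) (D₂ : ∀ i j, V i j →ₗ[ℂ] V i (j + 1))
    (h₁ : ∀ i j, V (i + 1) j →ₗ[ℂ] V i j) (h₂ : ∀ i j, V i (j + 1) →ₗ[ℂ] V i j)
    (σ : ∀ i j, V i j →ₗ[ℂ] V j i)
    (hD₁ : ∀ i j (v : V i j), D₁ (i + 1) j (D₁ i j v) = 0)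
    (hD₂ : ∀ i j (v : V i j), D₂ i (j + 1) (D₂ i j v) = 0)
    (hanti : ∀ i j (v : V i j), D₁ i (j + 1) (D₂ i j v) + D₂ (i + 1) j (D₁ i j v) = 0)
    (hh₁ : ∀ i j (v : V (i + 1) j),
      D₁ i j (h₁ i j v) + h₁ (i + 1) j (D₁ (i + 1) j v) = (j : ℂ) • v)
    (hh₁0 : ∀ j (v : V 0 j), h₁ 0 j (D₁ 0 j v) = (j : ℂ) • v)
    (hh₂ : ∀ i j (v : V i (j + 1)),
      D₂ i j (h₂ i j v) + h₂ i (j + 1) (D₂ i (j + 1) v) = (i : ℂ) • v)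
    (hh₂0 : ∀ i (v : V i 0), h₂ i 0 (D₂ i 0 v) = (i : ℂ) • v)
    (hσσ : ∀ i j (v : V i j), σ j i (σ i j v) = v)
    (hσD : ∀ i j (v : V i j), σ (i + 1) j (D₁ i j v) = D₂ j i (σ i j v))
    (p : ℕ) (hp : 1 ≤ p) :
    -- `D₂` restricts to maps `K^q → K^{q+1}` :
    (∀ q (v : V p q), D₁ p q v = 0 → D₁ p (q + 1) (D₂ p q v) = 0) ∧
    -- cohomology degree `n = 0` :
    Nonempty
      (cohomologyOf (LinearMap.ker (D₁ p 0) ⊓ LinearMap.ker (D₂ p 0))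
          (⊥ : Submodule ℂ (V p 0)) ≃ₗ[ℂ]
        cohomologyOf (LinearMap.ker (LinearMap.ker (D₂ 0 p)).subtype)
          (⊥ : Submodule ℂ (LinearMap.ker (D₂ 0 p)))) ∧
    -- cohomology degree `n = 1` :
    Nonempty
      (cohomologyOf (LinearMap.ker (D₁ p 1) ⊓ LinearMap.ker (D₂ p 1))
          (Submodule.map (D₂ p 0) (LinearMap.ker (D₁ p 0))) ≃ₗ[ℂ]
        cohomologyOf (LinearMap.ker (D₂ 0 p))
          (LinearMap.range (LinearMap.ker (D₂ 0 p)).subtype)) ∧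
    -- cohomology degrees `n = m + 2` :
    (∀ m : ℕ, Nonempty
      (cohomologyOf (LinearMap.ker (D₁ p (m + 2)) ⊓ LinearMap.ker (D₂ p (m + 2)))
          (Submodule.map (D₂ p (m + 1)) (LinearMap.ker (D₁ p (m + 1)))) ≃ₗ[ℂ]
        cohomologyOf (LinearMap.ker (D₂ 0 (p + m + 1)))
          (LinearMap.range (D₂ 0 (p + m))))) :=
  closed_column_cohomology_iso_truncation_general V D₁ D₂ h₁ h₂ hD₁ hD₂ hanti hh₁ hh₁0 hh₂ hh₂0 p hp
end

section
/- Let 𝔬 be a finite-dimensional local commutative ℂ-algebra and let A be any commutative ℂ-algebra. Then there exists a commutative ℂ-algebra A^𝔬 together with bijections Φ_R : Hom_{ℂ-alg}(A^𝔬, R) ≅ Hom_{ℂ-alg}(A, R ⊗_ℂ 𝔬), one for each commutative ℂ-algebra R, natural in R: for every ℂ-algebra homomorphism g : R → R' and every f ∈ Hom_{ℂ-alg}(A^𝔬, R), one has Φ_{R'}(g ∘ f) = ((g ⊗ id_𝔬) ∘ Φ_R(f)). In other words, the functor from commutative ℂ-algebras to sets sending R to Hom_{ℂ-alg}(A, R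 ⊗_ℂ 𝔬) is corepresentable. -/
open TensorProduct

universe u

/-- A bundled commutative ℂ-algebra. -/
structure BundledCommAlg : Type (u + 1) where
  carrier : Type u
  [commRing : CommRing carrier]
  [algebra : Algebra ℂ carrier]

attribute [instance] BundledCommAlg.commRing BundledCommAlg.algebra

/-!
Weil's construction. Present `A` as `k[x_s] ⧸ J` and let `b` be a basis of `𝔬`. A map
`A → R ⊗ 𝔬` is a choice of images `∑ i, r_{s,i} ⊗ b i` of the generators `x_s` at which every
`f ∈ J` vanishes. Reading `r_{s,i}` as the image of a new variable `x_{s,i}`, this says that the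
`b`-coordinates of `f (∑ i, x_{s,i} ⊗ b i)` are killed in `R`. Hence `k[x_{s,i}]` modulo these coordinates
corepresents `R ↦ Hom(A, R ⊗ 𝔬)`, naturally in `R` because base change along `R → R'` acts
on coordinates.
-/

namespace Module.Basis

variable {k ι 𝔬 R S : Type*} [CommSemiring k] [Semiring 𝔬] [Algebra k 𝔬] [Fintype ι]
  [CommSemiring R] [Algebra k R] [CommSemiring S] [Algebra k S] (b : Basis ι k 𝔬)

theorem map_baseChange_equivFun_symm (g : R →ₐ[k] S) (c : ι → R) :
    Algebra.TensorProduct.map g (AlgHom.id k 𝔬) ((b.baseChange R).equivFun.symm c) =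
      (b.baseChange S).equivFun.symm (g ∘ c) := by
  simp [Basis.equivFun_symm_apply, map_sum, TensorProduct.smul_tmul']

theorem baseChange_equivFun_map (g : R →ₐ[k] S) (x : R ⊗[k] 𝔬) :
    (b.baseChange S).equivFun (Algebra.TensorProduct.map g (AlgHom.id k 𝔬) x) =
      g ∘ (b.baseChange R).equivFun x := by
  conv_lhs => rw [← (b.baseChange R).equivFun.symm_apply_apply x]
  rw [map_baseChange_equivFun_symm, LinearEquiv.apply_symm_apply]

theorem map_eq_zero_iff_baseChange_equivFun (g : R →ₐ[k] S) (x : R ⊗[k] 𝔬) :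
    Algebra.TensorProduct.map g (AlgHom.id k 𝔬) x = 0 ↔
      ∀ i, g ((b.baseChange R).equivFun x i) = 0 := by
  rw [← (b.baseChange S).equivFun.map_eq_zero_iff, baseChange_equivFun_map, funext_iff]
  rfl

end Module.Basis

namespace AlgHom

variable {k A B C : Type*} [CommRing k] [CommRing A] [CommRing B] [CommRing C]
  [Algebra k A] [Algebra k B] [Algebra k C] (π : A →ₐ[k] B) (hπ : Function.Surjective π)

noncomputable def liftOfSurjectiveEquiv :
    {g : A →ₐ[k] C // RingHom.ker π ≤ RingHom.ker g} ≃ (B →ₐ[k] C) where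
  toFun g := π.liftOfSurjective hπ g.1 g.2
  invFun f := ⟨f.comp π, fun x hx => by
    rw [RingHom.mem_ker] at hx ⊢
    rw [AlgHom.comp_apply, hx, map_zero]⟩
  left_inv g := Subtype.ext (π.liftOfSurjective_comp hπ g.1 g.2)
  right_inv f := (AlgHom.cancel_right hπ).1 (π.liftOfSurjective_comp hπ _ _)

theorem liftOfSurjectiveEquiv_comp (g : {g : A →ₐ[k] C // RingHom.ker π ≤ RingHom.ker g}) :
    (π.liftOfSurjectiveEquiv hπ g).comp π = g :=
  congrArg Subtype.val ((π.liftOfSurjectiveEquiv hπ).symm_apply_apply g)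

end AlgHom

open MvPolynomial

namespace WeilRestriction

variable {k ι 𝔬 : Type*} [CommRing k] [CommSemiring 𝔬] [Algebra k 𝔬] [Fintype ι]
  (b : Module.Basis ι k 𝔬) (σ : Type*)
  {A : Type*} [CommRing A] [Algebra k A] (π : MvPolynomial σ k →ₐ[k] A)
  (hπ : Function.Surjective π)
  (R : Type*) [CommRing R] [Algebra k R]

/-- `X s ↦ ∑ i, X (s, i) ⊗ₜ b i`. -/
noncomputable def universal : MvPolynomial σ k →ₐ[k] MvPolynomial (σ × ι) k ⊗[k] 𝔬 :=
  aeval fun s => (b.baseChange _).equivFun.symm fun i => X (s, i)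

noncomputable def polyHomEquiv :
    (MvPolynomial (σ × ι) k →ₐ[k] R) ≃ (MvPolynomial σ k →ₐ[k] R ⊗[k] 𝔬) where
  toFun g := (Algebra.TensorProduct.map g (AlgHom.id k 𝔬)).comp (universal b σ)
  invFun ψ := aeval fun p => (b.baseChange R).equivFun (ψ (X p.1)) p.2
  left_inv g := by
    ext ⟨s, i⟩
    rw [aeval_X, AlgHom.comp_apply, universal, aeval_X, b.map_baseChange_equivFun_symm,
      LinearEquiv.apply_symm_apply]
    rfl
  right_inv ψ := by
    ext s : 1
    rw [AlgHom.comp_apply, universal, aeval_X, b.map_baseChange_equivFun_symm]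
    simp only [Function.comp_def, aeval_X, LinearEquiv.symm_apply_apply]

variable {σ R}

theorem polyHomEquiv_apply (g : MvPolynomial (σ × ι) k →ₐ[k] R) :
    polyHomEquiv b σ R g = (Algebra.TensorProduct.map g (AlgHom.id k 𝔬)).comp (universal b σ) :=
  rfl

theorem polyHomEquiv_comp {S : Type*} [CommRing S] [Algebra k S] (h : R →ₐ[k] S)
    (g : MvPolynomial (σ × ι) k →ₐ[k] R) :
    polyHomEquiv b σ S (h.comp g) =
      (Algebra.TensorProduct.map h (AlgHom.id k 𝔬)).comp (polyHomEquiv b σ R g) := by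
  rw [polyHomEquiv_apply, polyHomEquiv_apply, ← AlgHom.comp_assoc,
    ← Algebra.TensorProduct.map_comp, AlgHom.comp_id]

noncomputable def ideal (J : Ideal (MvPolynomial σ k)) : Ideal (MvPolynomial (σ × ι) k) :=
  Ideal.span {(b.baseChange _).equivFun (universal b σ j) i | (j ∈ J) (i : ι)}

theorem ideal_le_ker_iff (J : Ideal (MvPolynomial σ k)) (g : MvPolynomial (σ × ι) k →ₐ[k] R) :
    ideal b J ≤ RingHom.ker g ↔ J ≤ RingHom.ker (polyHomEquiv b σ R g) := by
  rw [ideal, Ideal.span_le]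
  constructor
  · intro h j hj
    rw [RingHom.mem_ker, polyHomEquiv_apply, AlgHom.comp_apply,
      b.map_eq_zero_iff_baseChange_equivFun]
    exact fun i => h ⟨j, hj, i, rfl⟩
  · rintro h _ ⟨j, hj, i, rfl⟩
    exact (b.map_eq_zero_iff_baseChange_equivFun g _).1 (h hj) i

variable (R) in
noncomputable def homEquiv :
    (MvPolynomial (σ × ι) k ⧸ ideal b (RingHom.ker π) →ₐ[k] R) ≃ (A →ₐ[k] R ⊗[k] 𝔬) :=
  ((Ideal.Quotient.mkₐ k _).liftOfSurjectiveEquiv (Ideal.Quotient.mkₐ_surjective k _)).symm.trans <|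
    ((polyHomEquiv b σ R).subtypeEquiv fun g => by
      convert ideal_le_ker_iff b (RingHom.ker π) g using 2
      exact Ideal.Quotient.mkₐ_ker k _).trans
    (π.liftOfSurjectiveEquiv hπ)

theorem homEquiv_comp_eq_polyHomEquiv (f : MvPolynomial (σ × ι) k ⧸ ideal b (RingHom.ker π) →ₐ[k] R) :
    (homEquiv b π hπ R f).comp π = polyHomEquiv b σ R (f.comp (Ideal.Quotient.mkₐ k _)) :=
  π.liftOfSurjectiveEquiv_comp hπ _

theorem homEquiv_comp {S : Type*} [CommRing S] [Algebra k S] (h : R →ₐ[k] S)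
    (f : MvPolynomial (σ × ι) k ⧸ ideal b (RingHom.ker π) →ₐ[k] R) :
    homEquiv b π hπ S (h.comp f) =
      (Algebra.TensorProduct.map h (AlgHom.id k 𝔬)).comp (homEquiv b π hπ R f) := by
  refine (AlgHom.cancel_right hπ).1 ?_
  rw [homEquiv_comp_eq_polyHomEquiv, AlgHom.comp_assoc, polyHomEquiv_comp, AlgHom.comp_assoc,
    homEquiv_comp_eq_polyHomEquiv]

end WeilRestriction

theorem weil_restriction_corepresentable_general
    (𝔬 : Type u) [CommRing 𝔬] [Algebra ℂ 𝔬] [FiniteDimensional ℂ 𝔬]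
    (A : Type u) [CommRing A] [Algebra ℂ A] :
    ∃ (B : BundledCommAlg.{u})
      (Φ : ∀ R : BundledCommAlg.{u},
        (B.carrier →ₐ[ℂ] R.carrier) ≃ (A →ₐ[ℂ] (R.carrier ⊗[ℂ] 𝔬))),
      ∀ (R R' : BundledCommAlg.{u}) (g : R.carrier →ₐ[ℂ] R'.carrier)
        (f : B.carrier →ₐ[ℂ] R.carrier),
        Φ R' (g.comp f) =
          (Algebra.TensorProduct.map g (AlgHom.id ℂ 𝔬)).comp (Φ R f) := by
  have hπ : Function.Surjective (aeval id : MvPolynomial A ℂ →ₐ[ℂ] A) :=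
    fun a => ⟨X a, aeval_X id a⟩
  exact ⟨⟨_ ⧸ WeilRestriction.ideal (Module.finBasis ℂ 𝔬) (RingHom.ker (aeval id))⟩,
    fun R => WeilRestriction.homEquiv _ _ hπ R.carrier,
    fun _ _ g f => WeilRestriction.homEquiv_comp _ _ hπ g f⟩

/-- Let `𝔬` be a finite-dimensional local commutative ℂ-algebra and `A` any
commutative ℂ-algebra. Then the functor `R ↦ Hom_{ℂ-alg}(A, R ⊗[ℂ] 𝔬)` on commutative
ℂ-algebras is corepresentable: there is a commutative ℂ-algebra `A^𝔬 = B` together with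
bijections `Hom_{ℂ-alg}(B, R) ≅ Hom_{ℂ-alg}(A, R ⊗[ℂ] 𝔬)`, natural in `R`. -/
theorem weil_restriction_corepresentable
    (𝔬 : Type u) [CommRing 𝔬] [Algebra ℂ 𝔬] [IsLocalRing 𝔬] [FiniteDimensional ℂ 𝔬]
    (A : Type u) [CommRing A] [Algebra ℂ A] :
    ∃ (B : BundledCommAlg.{u})
      (Φ : ∀ R : BundledCommAlg.{u},
        (B.carrier →ₐ[ℂ] R.carrier) ≃ (A →ₐ[ℂ] (R.carrier ⊗[ℂ] 𝔬))),
      ∀ (R R' : BundledCommAlg.{u}) (g : R.carrier →ₐ[ℂ] R'.carrier)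
        (f : B.carrier →ₐ[ℂ] R.carrier),
        Φ R' (g.comp f) =
          (Algebra.TensorProduct.map g (AlgHom.id ℂ 𝔬)).comp (Φ R f) :=
  weil_restriction_corepresentable_general 𝔬 A
end
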